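/- arXiv:1802.07440 — 3 statements merged into one kernel-verified Lean document; each statement's English description precedes it below -/
import Mathlib

section
/- Let G = (V,E) be a graph where every vertex has a strict preference order over its neighbors, and let M and N be matchings in G. Then Δ(N,M) = Σ_{e ∈ Ñ} cost_M(e), where Ñ is the perfect matching of G̃ obtained from N by adding a self-loop at every vertex left unmatched in N. -/
open scoped Classical

/-- A roommates instance: a (finite) graph `(V, adj)` together with a raw preference
relation: `pref u v w` means vertex `u` strictly prefers its neighbor `v` to its
neighbor `w`. -/
structure RoommatesInstance (V : Type) where
  adj : V → V → Prop
  adj_symm : ∀ u v, adj u v → adj v u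
  adj_irrefl : ∀ u, ¬ adj u u
  pref : V → V → V → Prop

namespace RoommatesInstance

variable {V : Type}

/-- The preference relation of each vertex is a strict linear order on its neighbors. -/
def StrictPrefs (G : RoommatesInstance V) : Prop :=
  (∀ u v w, G.pref u v w → G.adj u v ∧ G.adj u w) ∧
  (∀ u v w x, G.pref u v w → G.pref u w x → G.pref u v x) ∧
  (∀ u v w, G.pref u v w → ¬ G.pref u w v) ∧
  (∀ u v w, G.adj u v → G.adj u w → v ≠ w → G.pref u v w ∨ G.pref u w v)

/-- A matching, encoded by the partner function of the corresponding perfect matching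
`M̃` of `G̃` (the graph `G` with a self-loop added at every vertex): `m u = u` means
that `u` is unmatched in `M`, i.e. matched to itself along its self-loop in `M̃`. -/
structure Matching (G : RoommatesInstance V) where
  m : V → V
  invol : ∀ u, m (m u) = u
  adj_of_ne : ∀ u, m u ≠ u → G.adj u (m u)

variable (G : RoommatesInstance V)

/-- `u` considers `v` strictly better than `w`, where each of `v`, `w` is either a
neighbor of `u` or `u` itself (`u` itself stands for being unmatched, which every
vertex ranks below all of its neighbors). -/
def Better (u v w : V) : Prop :=
  (w = u ∧ v ≠ u) ∨ (v ≠ u ∧ w ≠ u ∧ G.pref u v w)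

/-- vertex `u` prefers matching `M` to matching `M'` -/
def Prefers (M M' : G.Matching) (u : V) : Prop :=
  G.Better u (M.m u) (M'.m u)

/-- `φ(M,M')`: the number of vertices preferring `M` to `M'` -/
noncomputable def phi [Fintype V] (M M' : G.Matching) : ℕ :=
  (Finset.univ.filter fun u => G.Prefers M M' u).card

/-- `Δ(M,M') = φ(M,M') - φ(M',M)` -/
noncomputable def delta [Fintype V] (M M' : G.Matching) : ℤ :=
  (G.phi M M' : ℤ) - (G.phi M' M : ℤ)

/-- a matching `M` is popular if it never loses a head-to-head election -/
def Popular [Fintype V] (M : G.Matching) : Prop :=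
  ∀ M' : G.Matching, 0 ≤ G.delta M M'

/-- `(u,v)` is a blocking edge to `M`: both endpoints prefer each other to their
assignments in `M̃`. -/
def Blocks (M : G.Matching) (u v : V) : Prop :=
  G.adj u v ∧ G.Better u v (M.m u) ∧ G.Better v u (M.m v)

/-- `(u,v)` is a negative edge to `M`: both endpoints prefer their assignments in `M̃`
to each other. -/
def Negative (M : G.Matching) (u v : V) : Prop :=
  G.adj u v ∧ G.Better u (M.m u) v ∧ G.Better v (M.m v) u

/-- `cost_M` on the edges of `G̃`: `cost_M(u,v) = 2` for a blocking edge, `-2` for a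
negative edge, `0` otherwise; `cost_M(u,u) = 0` if `u` is unmatched in `M` and `-1`
otherwise. -/
noncomputable def cost (M : G.Matching) (u v : V) : ℤ :=
  if u = v then (if M.m u = u then 0 else -1)
  else if G.Blocks M u v then 2
  else if G.Negative M u v then -2
  else 0

/-- a stable matching: no blocking edge -/
def Stable (M : G.Matching) : Prop := ∀ u v, ¬ G.Blocks M u v

/-- the number of edges of a matching -/
noncomputable def msize [Fintype V] (M : G.Matching) : ℕ :=
  (Finset.univ.filter fun u => M.m u ≠ u).card / 2

theorem cost_comm (M : G.Matching) (u v : V) : G.cost M u v = G.cost M v u := by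
  unfold cost
  rcases eq_or_ne u v with rfl | huv
  · rfl
  · rw [if_neg huv, if_neg (Ne.symm huv)]
    have hb : G.Blocks M u v ↔ G.Blocks M v u :=
      ⟨fun ⟨h1, h2, h3⟩ => ⟨G.adj_symm _ _ h1, h3, h2⟩,
       fun ⟨h1, h2, h3⟩ => ⟨G.adj_symm _ _ h1, h3, h2⟩⟩
    have hn : G.Negative M u v ↔ G.Negative M v u :=
      ⟨fun ⟨h1, h2, h3⟩ => ⟨G.adj_symm _ _ h1, h3, h2⟩,
       fun ⟨h1, h2, h3⟩ => ⟨G.adj_symm _ _ h1, h3, h2⟩⟩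
    simp only [hb, hn]

end RoommatesInstance

/-! `Δ(N, M)` is the sum over all vertices `u` of the vote of `u`: `+1` if `u` prefers `N`,
`-1` if it prefers `M`, `0` otherwise. Group these votes along the edges of `Ñ`: a self-loop
at `u` carries the vote of `u` alone, which is `cost_M(u, u)`, and an edge `(u, v)` carries
the sum of two votes, which is `cost_M(u, v)`. -/

theorem Function.Involutive.sum_image_sym2_mk {α β : Type*} [Fintype α] [DecidableEq α]
    [AddCommMonoid β] {σ : α → α} (hσ : Function.Involutive σ) (f : Sym2 α → β) (g : α → β)
    (hfix : ∀ u, σ u = u → f s(u, u) = g u)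
    (hpair : ∀ u, σ u ≠ u → f s(u, σ u) = g u + g (σ u)) :
    ∑ e ∈ Finset.univ.image (fun u => s(u, σ u)), f e = ∑ u, g u := by
  refine Finset.sum_image' g fun c _ => ?_
  have hfiber : Finset.univ.filter (fun c' => s(c', σ c') = s(c, σ c)) = {c, σ c} := by
    ext c'
    simp only [Finset.mem_filter, Finset.mem_univ, true_and, Finset.mem_insert,
      Finset.mem_singleton, Sym2.eq_iff]
    constructor
    · rintro (⟨rfl, -⟩ | ⟨rfl, -⟩) <;> simp
    · rintro (rfl | rfl)
      · exact Or.inl ⟨rfl, rfl⟩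
      · exact Or.inr ⟨rfl, hσ c⟩
  rw [hfiber]
  by_cases hc : σ c = c
  · rw [hc, Finset.pair_eq_singleton, Finset.sum_singleton, hfix c hc]
  · rw [Finset.sum_pair (Ne.symm hc), hpair c hc]

namespace RoommatesInstance

variable {V : Type} {G : RoommatesInstance V}

noncomputable def vote (M N : G.Matching) (u : V) : ℤ :=
  (if G.Prefers N M u then 1 else 0) - (if G.Prefers M N u then 1 else 0)

theorem delta_eq_sum_vote [Fintype V] (M N : G.Matching) :
    G.delta N M = ∑ u, vote M N u := by
  simp only [delta, phi, vote, Finset.sum_sub_distrib, Finset.card_filter]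
  push_cast
  rfl

theorem cost_self_eq_vote {M N : G.Matching} {u : V} (hNu : N.m u = u) :
    G.cost M u u = vote M N u := by
  by_cases hMu : M.m u = u <;> simp [cost, vote, Prefers, Better, hNu, hMu]

theorem blocks_partner_iff {M N : G.Matching} {u : V} (hNu : N.m u ≠ u) :
    G.Blocks M u (N.m u) ↔ G.Prefers N M u ∧ G.Prefers N M (N.m u) := by
  simp only [Blocks, Prefers, N.invol, N.adj_of_ne u hNu, true_and]

theorem negative_partner_iff {M N : G.Matching} {u : V} (hNu : N.m u ≠ u) :
    G.Negative M u (N.m u) ↔ G.Prefers M N u ∧ G.Prefers M N (N.m u) := by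
  simp only [Negative, Prefers, N.invol, N.adj_of_ne u hNu, true_and]

section StrictPrefs

variable (hG : G.StrictPrefs)
include hG

theorem better_asymm {u v w : V} (h : G.Better u v w) : ¬ G.Better u w v := by
  rcases h with ⟨rfl, hv⟩ | ⟨hv, hw, hp⟩
  · rintro (⟨rfl, -⟩ | ⟨h, -, -⟩)
    exacts [hv rfl, h rfl]
  · rintro (⟨rfl, -⟩ | ⟨-, -, hp'⟩)
    exacts [hv rfl, hG.2.2.1 _ _ _ hp hp']

theorem better_irrefl (u v : V) : ¬ G.Better u v v := fun h => better_asymm hG h h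

variable {M N : G.Matching} {u : V}

theorem prefers_asymm (h : G.Prefers M N u) : ¬ G.Prefers N M u := better_asymm hG h

theorem prefers_or_prefers (hNu : N.m u ≠ u) (hMN : M.m u ≠ N.m u) :
    G.Prefers N M u ∨ G.Prefers M N u := by
  by_cases hMu : M.m u = u
  · exact Or.inl (Or.inl ⟨hMu, hNu⟩)
  · rcases hG.2.2.2 u _ _ (N.adj_of_ne u hNu) (M.adj_of_ne u hMu) (Ne.symm hMN) with hp | hp
    exacts [Or.inl (Or.inr ⟨hNu, hMu, hp⟩), Or.inr (Or.inr ⟨hMu, hNu, hp⟩)]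

theorem vote_eq_one (h : G.Prefers N M u) : vote M N u = 1 := by
  rw [vote, if_pos h, if_neg (prefers_asymm hG h)]
  rfl

theorem vote_eq_neg_one (h : G.Prefers M N u) : vote M N u = -1 := by
  rw [vote, if_pos h, if_neg (prefers_asymm hG h)]
  rfl

theorem not_prefers_of_eq (h : M.m u = N.m u) : ¬ G.Prefers N M u := by
  rw [Prefers, h]
  exact better_irrefl hG _ _

theorem vote_eq_zero (h : M.m u = N.m u) : vote M N u = 0 := by
  rw [vote, if_neg (not_prefers_of_eq hG h), if_neg (not_prefers_of_eq hG h.symm)]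
  rfl

/-- `cost_M(u, N(u))` is `2` iff both endpoints prefer `N` and `-2` iff both prefer `M`;
otherwise their two votes cancel or are both zero. -/
theorem cost_partner_eq_vote_add_vote (hNu : N.m u ≠ u) :
    G.cost M u (N.m u) = vote M N u + vote M N (N.m u) := by
  set v := N.m u
  have hNv : N.m v = u := N.invol u
  have hcost : G.cost M u v = if G.Prefers N M u ∧ G.Prefers N M v then 2
      else if G.Prefers M N u ∧ G.Prefers M N v then -2 else 0 := by
    simp only [cost, if_neg (Ne.symm hNu), blocks_partner_iff hNu, negative_partner_iff hNu, v]
  by_cases hMu : M.m u = v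
  · have hMv : M.m v = N.m v := by rw [hNv, ← hMu, M.invol]
    simp [hcost, not_prefers_of_eq hG hMu, not_prefers_of_eq hG hMu.symm, vote_eq_zero hG hMu,
      vote_eq_zero hG hMv]
  have hMv : M.m v ≠ N.m v := fun h => hMu (by rw [← hNv, ← h, M.invol])
  rcases prefers_or_prefers hG hNu hMu with hu | hu <;>
    rcases prefers_or_prefers hG (hNv.trans_ne hNu.symm) hMv with hv | hv <;>
    simp [hcost, hu, hv, prefers_asymm hG hu, prefers_asymm hG hv, vote_eq_one hG,
      vote_eq_neg_one hG]

end StrictPrefs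

end RoommatesInstance

open RoommatesInstance in
/-- For matchings `M`, `N` in a roommates instance `G` with strict
preference lists, `Δ(N,M) = Σ_{e ∈ Ñ} cost_M(e)`, where `Ñ` is the perfect matching
of `G̃` obtained from `N` by adding a self-loop at every vertex unmatched in `N`. -/
theorem delta_eq_sum_cost {V : Type} [Fintype V] (G : RoommatesInstance V)
    (hG : G.StrictPrefs) (M N : G.Matching) :
    G.delta N M =
      ∑ e ∈ Finset.univ.image (fun u => s(u, N.m u)),
        Sym2.lift ⟨fun u v => G.cost M u v, fun u v => G.cost_comm M u v⟩ e := by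
  rw [delta_eq_sum_vote, Function.Involutive.sum_image_sym2_mk N.invol]
  · exact fun u hu => cost_self_eq_vote hu
  · exact fun u hu => cost_partner_eq_vote_add_vote hG hu
end

section
/- Let G = (V,E) be a graph with strict preference lists and M a matching in G. Then M is strongly dominant if and only if there exists α : V → ℝ such that α_u ∈ {−1,+1} for every vertex u matched in M, α_u = 0 for every vertex u unmatched in M, Σ_{u∈V} α_u = 0, α_u + α_v ≥ cost_M(u,v) for every edge (u,v) ∈ E, and α_u ≥ cost_M(u,u) for every u ∈ V. -/
open scoped Classical

namespace RoommatesInstance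

variable {V : Type} (G : RoommatesInstance V)

/-- `M` is strongly dominant: there is a partition `(L,R)` of `V` such that
`M ⊆ L × R`, `M` matches all of `R`, every blocking edge to `M` lies in `R × R`,
and every edge of `G` inside `L × L` is negative to `M`. -/
def StronglyDominant (M : G.Matching) : Prop :=
  ∃ L R : Set V,
    (∀ v, (v ∈ L ∨ v ∈ R) ∧ ¬ (v ∈ L ∧ v ∈ R)) ∧
    (∀ u, M.m u ≠ u → (u ∈ L ↔ M.m u ∈ R)) ∧
    (∀ u ∈ R, M.m u ≠ u) ∧
    (∀ u v, G.Blocks M u v → u ∈ R ∧ v ∈ R) ∧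
    (∀ u v, G.adj u v → u ∈ L → v ∈ L → G.Negative M u v)

end RoommatesInstance

/-!
No vertex strictly prefers its partner to itself, so `cost_M(u, M u) = 0` and a witness has
`α u + α (M u) ≥ 0` on every edge of `M̃`. These sums add up to `2 ∑ α = 0`, so they all vanish,
and `α` and the partition determine each other through `R = {α = 1}`. Blocking edges have cost `2`
and are thereby forced into `R × R`; an edge inside `L` that is not negative has cost
`0 ≥ α u + α v`, which forces both ends to be unmatched, so that the edge blocks `M`.
-/

namespace RoommatesInstance

variable {V : Type} {G : RoommatesInstance V}

theorem not_better_self (hG : G.StrictPrefs) (u x : V) : ¬ G.Better u x x := by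
  rintro (⟨hxu, hne⟩ | ⟨-, -, hpref⟩)
  · exact hne hxu
  · exact hG.2.2.1 _ _ _ hpref hpref

section Cost

variable (M : G.Matching) {u v : V}

theorem cost_self : G.cost M u u = if M.m u = u then 0 else -1 :=
  if_pos rfl

theorem cost_partner (hG : G.StrictPrefs) (hu : M.m u ≠ u) : G.cost M u (M.m u) = 0 := by
  rw [cost, if_neg (Ne.symm hu), if_neg fun h => not_better_self hG u _ h.2.1,
    if_neg fun h => not_better_self hG u _ h.2.1]

theorem cost_of_blocks (h : G.Blocks M u v) : G.cost M u v = 2 := by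
  have huv : u ≠ v := by rintro rfl; exact G.adj_irrefl u h.1
  rw [cost, if_neg huv, if_pos h]

theorem cost_of_negative (hb : ¬ G.Blocks M u v) (hn : G.Negative M u v) : G.cost M u v = -2 := by
  have huv : u ≠ v := by rintro rfl; exact G.adj_irrefl u hn.1
  rw [cost, if_neg huv, if_neg hb, if_pos hn]

theorem cost_nonpos_of_not_blocks (huv : u ≠ v) (hb : ¬ G.Blocks M u v) : G.cost M u v ≤ 0 := by
  rw [cost, if_neg huv, if_neg hb]
  split_ifs <;> norm_num

theorem cost_nonneg_of_not_negative (huv : u ≠ v) (hn : ¬ G.Negative M u v) :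
    0 ≤ G.cost M u v := by
  rw [cost, if_neg huv]
  split_ifs <;> norm_num

theorem blocks_of_unmatched (h : G.adj u v) (hu : M.m u = u) (hv : M.m v = v) :
    G.Blocks M u v := by
  have huv : u ≠ v := by rintro rfl; exact G.adj_irrefl u h
  exact ⟨h, .inl ⟨hu, huv.symm⟩, .inl ⟨hv, huv⟩⟩

end Cost

namespace Matching

variable (M : G.Matching) [Fintype V]

theorem sum_comp_m {β : Type*} [AddCommMonoid β] (f : V → β) : ∑ u, f (M.m u) = ∑ u, f u :=
  Equiv.sum_comp (Function.Involutive.toPerm M.m M.invol) f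

theorem sum_add_partner (α : V → ℝ) : ∑ u, (α u + α (M.m u)) = 2 * ∑ u, α u := by
  rw [Finset.sum_add_distrib, M.sum_comp_m, two_mul]

theorem sum_eq_zero_of_add_partner_eq_zero {α : V → ℝ} (h : ∀ u, α u + α (M.m u) = 0) :
    ∑ u, α u = 0 := by
  have htotal := M.sum_add_partner α
  rw [Finset.sum_eq_zero fun u _ => h u] at htotal
  linarith

theorem add_partner_eq_zero {α : V → ℝ} (hnonneg : ∀ u, 0 ≤ α u + α (M.m u))
    (hsum : ∑ u, α u = 0) (u : V) : α u + α (M.m u) = 0 := by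
  have htotal := M.sum_add_partner α
  rw [hsum, mul_zero] at htotal
  exact (Finset.sum_eq_zero_iff_of_nonneg fun v _ => hnonneg v).mp htotal u (Finset.mem_univ u)

end Matching

/-- A `{0, ±1}`-valued optimal solution, of value `0 = cost_M(M̃)`, of the dual of the LP
maximizing `cost_M` over the perfect matchings of `G̃`. -/
structure IsWitness [Fintype V] (M : G.Matching) (α : V → ℝ) : Prop where
  matched : ∀ u, M.m u ≠ u → α u = 1 ∨ α u = -1
  unmatched : ∀ u, M.m u = u → α u = 0
  sum_eq_zero : ∑ u, α u = 0
  edge : ∀ u v, G.adj u v → (G.cost M u v : ℝ) ≤ α u + α v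
  vertex : ∀ u, (G.cost M u u : ℝ) ≤ α u

section Witness

variable {M : G.Matching}

noncomputable def sideWitness (M : G.Matching) (R : Set V) (u : V) : ℝ :=
  if M.m u = u then 0 else if u ∈ R then 1 else -1

variable {R : Set V}

theorem sideWitness_of_mem (hR : ∀ u ∈ R, M.m u ≠ u) {u : V} (hu : u ∈ R) :
    sideWitness M R u = 1 := by
  simp [sideWitness, hR u hu, hu]

theorem neg_one_le_sideWitness (M : G.Matching) (R : Set V) (u : V) :
    -1 ≤ sideWitness M R u := by
  unfold sideWitness
  split_ifs <;> norm_num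

theorem sideWitness_add_partner (hR : ∀ u, M.m u ≠ u → (u ∉ R ↔ M.m u ∈ R)) (u : V) :
    sideWitness M R u + sideWitness M R (M.m u) = 0 := by
  by_cases hu : M.m u = u
  · simp [sideWitness, hu]
  have hmu : M.m (M.m u) ≠ M.m u := by rw [M.invol]; exact Ne.symm hu
  by_cases huR : u ∈ R
  · have hmuR : M.m u ∉ R := fun hmuR => (hR _ hmu).mpr (by rwa [M.invol]) hmuR
    simp [sideWitness, hu, hmu, huR, hmuR]
  · simp [sideWitness, hu, hmu, huR, (hR u hu).mp huR]

theorem cost_le_sideWitness_add (hRm : ∀ u ∈ R, M.m u ≠ u)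
    (hblocks : ∀ u v, G.Blocks M u v → u ∈ R ∧ v ∈ R)
    (hneg : ∀ u v, G.adj u v → u ∉ R → v ∉ R → G.Negative M u v) {u v : V} (huv : G.adj u v) :
    (G.cost M u v : ℝ) ≤ sideWitness M R u + sideWitness M R v := by
  have hu1 := neg_one_le_sideWitness M R u
  have hv1 := neg_one_le_sideWitness M R v
  by_cases hb : G.Blocks M u v
  · obtain ⟨huR, hvR⟩ := hblocks u v hb
    rw [cost_of_blocks M hb, sideWitness_of_mem hRm huR, sideWitness_of_mem hRm hvR]
    norm_num
  by_cases hLL : u ∉ R ∧ v ∉ R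
  · rw [cost_of_negative M hb (hneg u v huv hLL.1 hLL.2)]
    push_cast
    linarith
  have huv' : u ≠ v := by rintro rfl; exact G.adj_irrefl u huv
  have hcost : (G.cost M u v : ℝ) ≤ 0 := by exact_mod_cast cost_nonpos_of_not_blocks M huv' hb
  rcases not_and_or.mp hLL with huR | hvR
  · rw [sideWitness_of_mem hRm (not_not.mp huR)]; linarith
  · rw [sideWitness_of_mem hRm (not_not.mp hvR)]; linarith

theorem StronglyDominant.exists_isWitness [Fintype V] (h : G.StronglyDominant M) :
    ∃ α, IsWitness M α := by
  obtain ⟨L, R, hpart, hLR, hRm, hblocks, hneg⟩ := h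
  have hL : ∀ u, u ∈ L ↔ u ∉ R := fun u =>
    ⟨fun huL huR => (hpart u).2 ⟨huL, huR⟩, (hpart u).1.resolve_right⟩
  simp only [hL] at hLR hneg
  refine ⟨sideWitness M R, ⟨fun u hu => ?_, fun u hu => if_pos hu,
    M.sum_eq_zero_of_add_partner_eq_zero (sideWitness_add_partner hLR),
    fun u v => cost_le_sideWitness_add hRm hblocks hneg, fun u => ?_⟩⟩
  · by_cases huR : u ∈ R <;> simp [sideWitness, hu, huR]
  · rw [cost_self]
    by_cases hu : M.m u = u
    · simp [sideWitness, hu]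
    · simpa [hu] using neg_one_le_sideWitness M R u

section IsWitness

variable [Fintype V] {α : V → ℝ}

theorem IsWitness.le_one (hα : IsWitness M α) (u : V) : α u ≤ 1 := by
  by_cases hu : M.m u = u
  · rw [hα.unmatched u hu]; norm_num
  · rcases hα.matched u hu with h | h <;> linarith

theorem IsWitness.nonpos_of_ne_one (hα : IsWitness M α) {u : V} (h : α u ≠ 1) : α u ≤ 0 := by
  by_cases hu : M.m u = u
  · rw [hα.unmatched u hu]
  · rw [(hα.matched u hu).resolve_left h]; norm_num

theorem IsWitness.unmatched_of_eq_zero (hα : IsWitness M α) {u : V} (h : α u = 0) :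
    M.m u = u := by
  by_contra hu
  rcases hα.matched u hu with h' | h' <;> linarith

theorem IsWitness.add_partner_eq_zero (hα : IsWitness M α) (hG : G.StrictPrefs) (u : V) :
    α u + α (M.m u) = 0 := by
  refine M.add_partner_eq_zero (fun v => ?_) hα.sum_eq_zero u
  by_cases hv : M.m v = v
  · rw [hv, hα.unmatched v hv, add_zero]
  · simpa [cost_partner M hG hv] using hα.edge v (M.m v) (M.adj_of_ne v hv)

theorem IsWitness.stronglyDominant (hα : IsWitness M α) (hG : G.StrictPrefs) :
    G.StronglyDominant M := by
  refine ⟨{u | α u ≠ 1}, {u | α u = 1}, fun v => ⟨em' _, fun h => h.1 h.2⟩,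
    fun u hu => ?_, fun u hu hmu => ?_, fun u v hb => ?_, fun u v huv hu hv => ?_⟩
  · have hmu : α (M.m u) = -α u := by linarith [hα.add_partner_eq_zero hG u]
    show α u ≠ 1 ↔ α (M.m u) = 1
    rw [hmu]
    rcases hα.matched u hu with h | h <;> rw [h] <;> norm_num
  · exact zero_ne_one ((hα.unmatched u hmu).symm.trans hu)
  · have hedge := hα.edge u v hb.1
    rw [cost_of_blocks M hb] at hedge
    push_cast at hedge
    exact ⟨show α u = 1 by linarith [hα.le_one v, hα.le_one u],
      show α v = 1 by linarith [hα.le_one v, hα.le_one u]⟩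
  · have hu0 := hα.nonpos_of_ne_one hu
    have hv0 := hα.nonpos_of_ne_one hv
    have hedge := hα.edge u v huv
    have huv' : u ≠ v := by rintro rfl; exact G.adj_irrefl u huv
    by_contra hn
    have hcost : (0 : ℝ) ≤ G.cost M u v := by exact_mod_cast cost_nonneg_of_not_negative M huv' hn
    have hb := blocks_of_unmatched M huv (hα.unmatched_of_eq_zero (by linarith))
      (hα.unmatched_of_eq_zero (by linarith))
    rw [cost_of_blocks M hb] at hedge
    push_cast at hedge
    linarith

end IsWitness

end Witness

end RoommatesInstance

open RoommatesInstance in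
/-- `M` is strongly dominant iff there is `α : V → ℝ` with
`α_u ∈ {±1}` for matched `u`, `α_u = 0` for unmatched `u`, `Σ α_u = 0`,
`α_u + α_v ≥ cost_M(u,v)` on every edge, and `α_u ≥ cost_M(u,u)` for every vertex. -/
theorem stronglyDominant_iff_witness {V : Type} [Fintype V] (G : RoommatesInstance V)
    (hG : G.StrictPrefs) (M : G.Matching) :
    G.StronglyDominant M ↔
      ∃ α : V → ℝ,
        (∀ u, M.m u ≠ u → α u = 1 ∨ α u = -1) ∧
        (∀ u, M.m u = u → α u = 0) ∧
        (∑ u, α u) = 0 ∧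
        (∀ u v, G.adj u v → (G.cost M u v : ℝ) ≤ α u + α v) ∧
        (∀ u, (G.cost M u u : ℝ) ≤ α u) := by
  constructor
  · intro h
    obtain ⟨α, ⟨h1, h2, h3, h4, h5⟩⟩ := h.exists_isWitness
    exact ⟨α, h1, h2, h3, h4, h5⟩
  · rintro ⟨α, h1, h2, h3, h4, h5⟩
    exact IsWitness.stronglyDominant ⟨h1, h2, h3, h4, h5⟩ hG
end

section
/- Let G = (V,E) be a graph with strict preference lists and let G' be the associated bidirected instance. If M' is a stable matching in G', then the projection M of M' is a strongly dominant matching in G. -/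
open scoped Classical

namespace RoommatesInstance

variable {V : Type} (G : RoommatesInstance V)

/-- A matching `M'` in the bidirected instance `G'` associated with `G`.  `G'` has the
same vertex set as `G` and, for each edge `(u,v)` of `G`, the two parallel edges
`(u⁺,v⁻)` and `(u⁻,v⁺)`.  We record, for each vertex `u`, its partner together with
the sign of the copy of the partner that `u` is matched to: `p u = some (v, s)` means
that `u` is matched to `v^s` (`s = true` is `+`, `s = false` is `-`), i.e. the edge
`(u^{¬s}, v^s)` of `G'` is in `M'`. -/
structure BidirMatching where
  p : V → Option (V × Bool)
  mem_adj : ∀ u v s, p u = some (v, s) → G.adj u v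
  consistent : ∀ u v s, p u = some (v, s) → p v = some (u, !s)

/-- The edge `(u⁺,v⁻)` belongs to `M'` iff `u` is matched to `v⁻`. -/
def BidirMatching.hasEdge {G : RoommatesInstance V} (M' : G.BidirMatching) (u v : V) : Prop :=
  M'.p u = some (v, false)

/-- In `G'`, if `u`'s preference list in `G` is `v_1 ≻ ⋯ ≻ v_k`, then `u`'s list in
`G'` is `v_1⁻ ≻ ⋯ ≻ v_k⁻ ≻ v_1⁺ ≻ ⋯ ≻ v_k⁺`.  `M'` is stable in `G'` if for every
edge `(u⁺,v⁻) ∉ M'`, either `u` is matched to a neighbor it ranks better than `v⁻`,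
or `v` is matched to a neighbor it ranks better than `u⁺`. -/
def BidirStable (M' : G.BidirMatching) : Prop :=
  ∀ u v, G.adj u v → ¬ M'.hasEdge u v →
    (∃ w, M'.p u = some (w, false) ∧ G.pref u w v) ∨
    (∃ w t, M'.p v = some (w, t) ∧ (t = false ∨ (t = true ∧ G.pref v w u)))

/-- `M` is the projection of `M'`: `M = {(u,v) : (u⁺,v⁻) ∈ M' or (u⁻,v⁺) ∈ M'}`. -/
def IsProjection (M' : G.BidirMatching) (M : G.Matching) : Prop :=
  ∀ u, M.m u = ((M'.p u).map Prod.fst).getD u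

end RoommatesInstance


/-!
Take `R` to be the set of vertices `u` with `u⁺` matched in `M'` (to some `v⁻`) and `L` its
complement; every projected edge comes from some `(u⁺, v⁻)`, so it joins `R` to `L`.
If `(u, v)` blocks `M`, the edge `(v⁺, u⁻)` of `G'` is not dominated at `v`, nor at `u` by a
partner `w⁺`, because `u` and `v` prefer each other to their partners; so `u` is matched to
some `w⁻`, i.e. `u ∈ R`. If `u, v ∈ L` are adjacent, the edge `(u⁺, v⁻)` can only be dominated
at `v`, by a partner `w⁺` with `w ≻_v u`; so `v` prefers its partner to `u`, and symmetrically.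
-/

namespace RoommatesInstance

variable {V : Type} {G : RoommatesInstance V}

theorem adj_ne {u v : V} (h : G.adj u v) : u ≠ v := by
  rintro rfl
  exact G.adj_irrefl u h

theorem Blocks.symm {M : G.Matching} {u v : V} (h : G.Blocks M u v) : G.Blocks M v u :=
  ⟨G.adj_symm u v h.1, h.2.2, h.2.1⟩

namespace StrictPrefs

variable (hG : G.StrictPrefs)
include hG

theorem better_of_pref {u v w : V} (h : G.pref u v w) : G.Better u v w :=
  Or.inr ⟨(adj_ne (hG.1 u v w h).1).symm, (adj_ne (hG.1 u v w h).2).symm, h⟩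

theorem not_pref_of_better {u v w : V} (h : G.Better u v w) : ¬ G.pref u w v := by
  rcases h with ⟨rfl, -⟩ | ⟨-, -, hvw⟩
  · exact fun hwv => G.adj_irrefl w (hG.1 w w v hwv).1
  · exact hG.2.2.1 u v w hvw

theorem not_better_self (u v : V) : ¬ G.Better u v v := by
  rintro (⟨rfl, hv⟩ | ⟨-, -, hvv⟩)
  · exact hv rfl
  · exact hG.2.2.1 u v v hvv hvv

end StrictPrefs

namespace BidirMatching

def PlusMatched (M' : G.BidirMatching) : Set V :=
  {u | ∃ v, M'.hasEdge u v}

theorem mem_plusMatched_iff {M' : G.BidirMatching} {u v : V} {s : Bool}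
    (h : M'.p u = some (v, s)) : u ∈ M'.PlusMatched ↔ s = false := by
  simp [PlusMatched, hasEdge, h]

end BidirMatching

namespace IsProjection

variable {M' : G.BidirMatching} {M : G.Matching} (hproj : G.IsProjection M' M)
include hproj

theorem m_eq {u v : V} {s : Bool} (h : M'.p u = some (v, s)) : M.m u = v := by
  rw [hproj u, h]
  rfl

theorem exists_p_eq_of_m_ne {u : V} (h : M.m u ≠ u) : ∃ v s, M'.p u = some (v, s) := by
  rcases hp : M'.p u with _ | ⟨v, s⟩
  · exact absurd (by rw [hproj u, hp]; rfl) h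
  · exact ⟨v, s, rfl⟩

theorem m_ne_of_mem_plusMatched {u : V} (hu : u ∈ M'.PlusMatched) : M.m u ≠ u := by
  obtain ⟨v, hv⟩ := hu
  rw [hproj.m_eq hv]
  exact (adj_ne (M'.mem_adj u v false hv)).symm

theorem mem_plusMatched_iff_not_mem {u : V} (hu : M.m u ≠ u) :
    u ∉ M'.PlusMatched ↔ M.m u ∈ M'.PlusMatched := by
  obtain ⟨v, s, hv⟩ := hproj.exists_p_eq_of_m_ne hu
  rw [hproj.m_eq hv, BidirMatching.mem_plusMatched_iff hv,
    BidirMatching.mem_plusMatched_iff (M'.consistent u v s hv)]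
  cases s <;> simp

variable (hG : G.StrictPrefs) (hM' : G.BidirStable M')
include hG hM'

theorem mem_plusMatched_of_blocks {u v : V} (hb : G.Blocks M u v) : u ∈ M'.PlusMatched := by
  obtain ⟨huv, hbu, hbv⟩ := hb
  have hvu : ¬ M'.hasEdge v u := fun h => hG.not_better_self v u (hproj.m_eq h ▸ hbv)
  rcases hM' v u (G.adj_symm u v huv) hvu with ⟨w, hw, hpref⟩ | ⟨w, t, hw, ht⟩
  · exact absurd hpref (hG.not_pref_of_better (hproj.m_eq hw ▸ hbv))
  · rcases ht with rfl | ⟨rfl, hpref⟩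
    · exact ⟨w, hw⟩
    · exact absurd hpref (hG.not_pref_of_better (hproj.m_eq hw ▸ hbu))

theorem better_of_not_mem_plusMatched {u v : V} (huv : G.adj u v)
    (hu : u ∉ M'.PlusMatched) (hv : v ∉ M'.PlusMatched) : G.Better v (M.m v) u := by
  rcases hM' u v huv (fun h => hu ⟨v, h⟩) with ⟨w, hw, -⟩ | ⟨w, t, hw, ht⟩
  · exact absurd ⟨w, hw⟩ hu
  · rcases ht with rfl | ⟨rfl, hpref⟩
    · exact absurd ⟨w, hw⟩ hv
    · exact hproj.m_eq hw ▸ hG.better_of_pref hpref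

end IsProjection

end RoommatesInstance

open RoommatesInstance in
theorem projection_of_bidirStable_stronglyDominant_general {V : Type}
    (G : RoommatesInstance V) (hG : G.StrictPrefs)
    (M' : G.BidirMatching) (hM' : G.BidirStable M')
    (M : G.Matching) (hproj : G.IsProjection M' M) :
    G.StronglyDominant M := by
  refine ⟨M'.PlusMatchedᶜ, M'.PlusMatched, fun v => ⟨em' _, fun h => h.1 h.2⟩,
    fun u hu => hproj.mem_plusMatched_iff_not_mem hu,
    fun u hu => hproj.m_ne_of_mem_plusMatched hu, ?_, ?_⟩
  · intro u v hb
    exact ⟨hproj.mem_plusMatched_of_blocks hG hM' hb,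
      hproj.mem_plusMatched_of_blocks hG hM' hb.symm⟩
  · intro u v huv hu hv
    exact ⟨huv, hproj.better_of_not_mem_plusMatched hG hM' (G.adj_symm u v huv) hv hu,
      hproj.better_of_not_mem_plusMatched hG hM' huv hu hv⟩

open RoommatesInstance in
/-- If `M'` is a stable matching in the bidirected instance `G'`,
then the projection `M` of `M'` is a strongly dominant matching in `G`. -/
theorem projection_of_bidirStable_stronglyDominant {V : Type} [Fintype V]
    (G : RoommatesInstance V) (hG : G.StrictPrefs)
    (M' : G.BidirMatching) (hM' : G.BidirStable M')
    (M : G.Matching) (hproj : G.IsProjection M' M) :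
    G.StronglyDominant M :=
  projection_of_bidirStable_stronglyDominant_general G hG M' hM' M hproj
end
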